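/- Let G and H be finitely presented groups with fixed finite symmetric generating sets S and T, let n ∈ ℕ, and let 𝒜 = B_H(n,1_H)^S × B_G(n²+n,1_G)^{B_H(n,1_H)}. Then the set {(df, ℓ_{Ff}) : (f,F) ∈ QIP_n(G,H)} ⊆ 𝒜^G is a subshift of finite type. -/

import Mathlib

/-- The Cayley graph of a group with respect to a (symmetric) set `S`:
`g` and `g'` are adjacent when they differ by right multiplication by an element of `S`. -/
def cayley {G : Type*} [Group G] (S : Set G) : SimpleGraph G :=
  SimpleGraph.fromRel (fun g g' => g⁻¹ * g' ∈ S)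

/-- The closed ball of radius `n` about `g` in the word metric induced by `S`. -/
def ball {G : Type*} [Group G] (S : Set G) (n : ℕ) (g : G) : Set G :=
  {x : G | (cayley S).dist g x ≤ n}

/-- `f : G → H` is `n`-Lipschitz for the word metrics associated to `S` and `T`. -/
def IsLip {G H : Type*} [Group G] [Group H] (S : Set G) (T : Set H)
    (n : ℕ) (f : G → H) : Prop :=
  ∀ x y : G, (cayley T).dist (f x) (f y) ≤ n * (cayley S).dist x y

/-- The product in `G` of (the letters of) a word over `S`. -/
def wordProd {G : Type*} [Group G] (S : Finset G) (w : List ↥S) : G :=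
  (w.map (fun s => (s : G))).prod

/-- The integral `∫_{g·w} σ` of a configuration `σ : G → (S → H)` along the word `w` based at
`g` : the telescoping product `σ(g)(s₀)·σ(gs₀)(s₁)⋯σ(gs₀⋯s_{k-1})(s_k)`. -/
def sint {G H : Type*} [Group G] [Group H] {S : Finset G}
    (σ : G → ↥S → H) : G → List ↥S → H
  | _, [] => 1
  | g, s :: w => σ g s * sint σ (g * (s : G)) w

/-- An `n`-QI pair: `f` and `F` are `n`-Lipschitz and mutual `n`-quasi-inverses. -/
def IsQIPair {G H : Type*} [Group G] [Group H] (S : Set G) (T : Set H)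
    (n : ℕ) (f : G → H) (F : H → G) : Prop :=
  IsLip S T n f ∧ IsLip T S n F ∧
    (∀ g : G, (cayley S).dist (F (f g)) g ≤ n) ∧
    (∀ h : H, (cayley T).dist (f (F h)) h ≤ n)

/-- `f : G → H` is a quasi-isometry for the word metrics: for some `n > 0` it is an
`n`-quasi-isometric embedding and `n`-quasi-surjective. -/
def IsQI {G H : Type*} [Group G] [Group H] (S : Set G) (T : Set H) (f : G → H) : Prop :=
  ∃ n : ℕ, 0 < n ∧
    (∀ x y : G,
      ((cayley S).dist x y : ℝ) / n - n ≤ ((cayley T).dist (f x) (f y) : ℝ) ∧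
      ((cayley T).dist (f x) (f y) : ℝ) ≤ n * ((cayley S).dist x y : ℝ) + n) ∧
    (∀ h : H, ∃ g : G, (cayley T).dist (f g) h ≤ n)

/-- An elementary homotopy move between words over `S`: replace a subword `v` of length at
most `K` by a word `v'` of length at most `K` representing the same element of `G`. -/
def ElemMove {G : Type*} [Group G] (S : Finset G) (K : ℕ) (w₁ w₂ : List ↥S) : Prop :=
  ∃ u v v' x : List ↥S, w₁ = u ++ v ++ x ∧ w₂ = u ++ v' ++ x ∧
    v.length ≤ K ∧ v'.length ≤ K ∧ wordProd S v = wordProd S v'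

/-- `G` is presented over the (symmetric) generating set `S` by relators of length at most
`K`: any two words over `S` representing the same element of `G` are connected by a finite
sequence of elementary moves of size at most `K`. -/
def PresentedBy {G : Type*} [Group G] (S : Finset G) (K : ℕ) : Prop :=
  ∀ w w' : List ↥S, wordProd S w = wordProd S w' →
    Relation.ReflTransGen (ElemMove S K) w w'

/-- `X ⊆ A^G` is a subshift of finite type: there is a finite family of forbidden patterns
`p i : F i → A` (`F i ⊆ G` finite) such that `X` consists exactly of those `σ` for which no
translate `σ·g = (x ↦ σ (g * x))` restricts on `F i` to `p i`. -/
def IsSFT {G A : Type*} [Group G] (X : Set (G → A)) : Prop :=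
  ∃ (ι : Type) (_ : Finite ι) (F : ι → Finset G) (p : (i : ι) → (↥(F i) → A)),
    X = {σ : G → A | ∀ (g : G) (i : ι), ∃ x : ↥(F i), σ (g * ↑x) ≠ p i x}

/-!
`σ` lies in the shift iff it satisfies, at every `g`, finitely many rules (`Rules`) that read `σ`
only on a ball about `g`; forbidding the finitely many patterns on that ball that violate them
gives the subshift of finite type. A genuine `(df, ℓ_{Ff})` obeys the rules by direct computation.
Conversely, since `G` is finitely presented, the rule that the integral of the first component
agrees along short words with equal product makes it path independent, which produces `f`. For
`F`, a marker `(g, k)` stands for the point `f g * k` of `H` and lands at `g * ℓ(g)(k)`. Markers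
are pushed along words over `T` one letter at a time (rule `step`), nearby markers for the same
point land at the same place (rule `merge`), so parallel pushes stay together, and since `H` is
finitely presented the landing place depends only on the point of `H` reached. The remaining
rules then say that `(f, F)` is an `n`-QI pair.
-/

lemma SimpleGraph.Connected.dist_triangle4 {V : Type*} {Γ : SimpleGraph V} (hconn : Γ.Connected)
    (a b c d : V) : Γ.dist a d ≤ Γ.dist a b + Γ.dist b c + Γ.dist c d :=
  (hconn.dist_triangle (v := c)).trans (Nat.add_le_add_right hconn.dist_triangle _)

section WordMetric

variable {G : Type*} [Group G]

lemma cayley_adj_iff {S : Set G} {x y : G} :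
    (cayley S).Adj x y ↔ x ≠ y ∧ (x⁻¹ * y ∈ S ∨ y⁻¹ * x ∈ S) := Iff.rfl

def cayleyMulLeft (S : Set G) (a : G) : cayley S ≃g cayley S where
  toEquiv := Equiv.mulLeft a
  map_rel_iff' := by simp [cayley_adj_iff, mul_assoc]

lemma cayley_dist_mul_left_le (S : Set G) (a x y : G) :
    (cayley S).dist (a * x) (a * y) ≤ (cayley S).dist x y := by
  by_cases h : (cayley S).Reachable x y
  · obtain ⟨p, hp⟩ := h.exists_walk_length_eq_dist
    calc (cayley S).dist (a * x) (a * y)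
        ≤ (p.map (cayleyMulLeft S a).toHom).length := SimpleGraph.dist_le _
      _ = (cayley S).dist x y := by rw [SimpleGraph.Walk.length_map, hp]
  · have h' : ¬(cayley S).Reachable (a * x) (a * y) :=
      mt (SimpleGraph.Iso.reachable_iff (φ := cayleyMulLeft S a)).1 h
    simp [SimpleGraph.dist_eq_zero_of_not_reachable h']

@[simp]
lemma cayley_dist_mul_left (S : Set G) (a x y : G) :
    (cayley S).dist (a * x) (a * y) = (cayley S).dist x y := by
  refine (cayley_dist_mul_left_le S a x y).antisymm ?_
  simpa using cayley_dist_mul_left_le S a⁻¹ (a * x) (a * y)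

lemma cayley_dist_self_mul (S : Set G) (a x : G) :
    (cayley S).dist a (a * x) = (cayley S).dist 1 x := by
  simpa using cayley_dist_mul_left S a 1 x

lemma cayley_dist_inv_mul_left (S : Set G) (a x y : G) :
    (cayley S).dist (a⁻¹ * x) y = (cayley S).dist x (a * y) := by
  rw [← cayley_dist_mul_left S a, mul_inv_cancel_left]

lemma one_mem_ball (S : Set G) (r : ℕ) : (1 : G) ∈ ball S r 1 := by
  simp [ball]

variable {S : Finset G}

@[simp] lemma wordProd_nil : wordProd S [] = 1 := rfl

@[simp] lemma wordProd_cons (s : S) (w : List S) :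
    wordProd S (s :: w) = s * wordProd S w := by
  simp [wordProd]

@[simp] lemma wordProd_append (w₁ w₂ : List S) :
    wordProd S (w₁ ++ w₂) = wordProd S w₁ * wordProd S w₂ := by
  simp [wordProd]

lemma exists_walk_mul_wordProd (x : G) (w : List S) :
    ∃ p : (cayley (S : Set G)).Walk x (x * wordProd S w), p.length ≤ w.length := by
  induction w generalizing x with
  | nil => exact ⟨SimpleGraph.Walk.nil.copy rfl (by simp), (SimpleGraph.Walk.length_copy ..).le⟩
  | cons s w ih =>
    obtain ⟨p, hp⟩ := ih (x * s)
    rw [wordProd_cons, ← mul_assoc]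
    by_cases hs : x = x * s
    · exact ⟨p.copy hs.symm rfl, by simpa using hp.trans (Nat.le_succ _)⟩
    · have hadj : (cayley (S : Set G)).Adj x (x * s) :=
        (cayley_adj_iff).2 ⟨hs, .inl (by simp)⟩
      exact ⟨.cons hadj p, by simpa using hp⟩

lemma dist_mul_wordProd_le (x : G) (w : List S) :
    (cayley (S : Set G)).dist x (x * wordProd S w) ≤ w.length :=
  let ⟨p, hp⟩ := exists_walk_mul_wordProd x w
  (SimpleGraph.dist_le p).trans hp

lemma dist_mul_le_one {x s : G} (hs : s ∈ S) : (cayley (S : Set G)).dist x (x * s) ≤ 1 := by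
  simpa using dist_mul_wordProd_le x [⟨s, hs⟩]

lemma exists_wordProd_of_walk (hS : ∀ s ∈ S, s⁻¹ ∈ S) {x y : G}
    (p : (cayley (S : Set G)).Walk x y) :
    ∃ w : List S, w.length = p.length ∧ x * wordProd S w = y := by
  induction p with
  | nil => exact ⟨[], rfl, by simp⟩
  | @cons u v y hadj p ih =>
    obtain ⟨w, hw, hprod⟩ := ih
    have hs : u⁻¹ * v ∈ S := by
      rcases ((cayley_adj_iff).1 hadj).2 with h | h
      · exact h
      · simpa using hS _ h
    exact ⟨⟨u⁻¹ * v, hs⟩ :: w, by simp [hw], by simpa [mul_assoc] using hprod⟩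

lemma exists_wordProd_eq_of_mem_closure (hS : ∀ s ∈ S, s⁻¹ ∈ S) {g : G}
    (hg : g ∈ Subgroup.closure (S : Set G)) : ∃ w : List S, wordProd S w = g := by
  induction hg using Subgroup.closure_induction with
  | mem s hs => exact ⟨[⟨s, hs⟩], by simp⟩
  | one => exact ⟨[], rfl⟩
  | mul a b _ _ iha ihb =>
    obtain ⟨wa, rfl⟩ := iha
    obtain ⟨wb, rfl⟩ := ihb
    exact ⟨wa ++ wb, wordProd_append wa wb⟩
  | inv a _ iha =>
    obtain ⟨wa, rfl⟩ := iha
    obtain ⟨p, -⟩ := exists_walk_mul_wordProd (wordProd S wa)⁻¹ wa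
    obtain ⟨w, -, hw⟩ := exists_wordProd_of_walk hS p.reverse
    exact ⟨w, by simpa using hw⟩

lemma cayley_connected (hS : ∀ s ∈ S, s⁻¹ ∈ S)
    (hgen : Subgroup.closure (S : Set G) = ⊤) : (cayley (S : Set G)).Connected := by
  refine (SimpleGraph.connected_iff _).2 ⟨fun x y => ?_, ⟨1⟩⟩
  obtain ⟨w, hw⟩ :=
    exists_wordProd_eq_of_mem_closure hS (hgen ▸ Subgroup.mem_top (x⁻¹ * y))
  obtain ⟨p, -⟩ := exists_walk_mul_wordProd x w
  exact ⟨p.copy rfl (by rw [hw, mul_inv_cancel_left])⟩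

lemma exists_wordProd_of_dist (hS : ∀ s ∈ S, s⁻¹ ∈ S)
    (hconn : (cayley (S : Set G)).Connected) (x y : G) :
    ∃ w : List S, w.length = (cayley (S : Set G)).dist x y ∧ x * wordProd S w = y := by
  obtain ⟨p, hp⟩ := hconn.exists_walk_length_eq_dist x y
  obtain ⟨w, hw, hprod⟩ := exists_wordProd_of_walk hS p
  exact ⟨w, hw.trans hp, hprod⟩

lemma exists_wordProd_eq (hS : ∀ s ∈ S, s⁻¹ ∈ S) (hconn : (cayley (S : Set G)).Connected)
    (x : G) : ∃ w : List S, wordProd S w = x := by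
  obtain ⟨w, -, hw⟩ := exists_wordProd_of_dist hS hconn 1 x
  exact ⟨w, by simpa using hw⟩

lemma exists_wordProd_of_mem_ball (hS : ∀ s ∈ S, s⁻¹ ∈ S)
    (hconn : (cayley (S : Set G)).Connected) {r : ℕ} {x : G} (hx : x ∈ ball (S : Set G) r 1) :
    ∃ w : List S, w.length ≤ r ∧ wordProd S w = x := by
  obtain ⟨w, hw, hprod⟩ := exists_wordProd_of_dist hS hconn 1 x
  exact ⟨w, hw ▸ hx, by simpa using hprod⟩

lemma ball_finite (hS : ∀ s ∈ S, s⁻¹ ∈ S) (hconn : (cayley (S : Set G)).Connected)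
    (r : ℕ) : (ball (S : Set G) r 1).Finite := by
  refine ((List.finite_length_le S r).image (wordProd S)).subset fun x hx => ?_
  obtain ⟨w, hw, rfl⟩ := exists_wordProd_of_mem_ball hS hconn hx
  exact ⟨w, hw, rfl⟩

lemma isLip_of_dist_mul_le {H : Type*} [Group H] {T : Set H}
    (hS : ∀ s ∈ S, s⁻¹ ∈ S) (hconnS : (cayley (S : Set G)).Connected)
    (hconnT : (cayley T).Connected) {n : ℕ} {φ : G → H}
    (hφ : ∀ x, ∀ s ∈ S, (cayley T).dist (φ x) (φ (x * s)) ≤ n) :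
    IsLip (S : Set G) T n φ := by
  have key : ∀ (w : List S) (x : G),
      (cayley T).dist (φ x) (φ (x * wordProd S w)) ≤ n * w.length := by
    intro w
    induction w with
    | nil => simp
    | cons s w ih =>
      intro x
      calc (cayley T).dist (φ x) (φ (x * wordProd S (s :: w)))
          ≤ (cayley T).dist (φ x) (φ (x * s)) +
            (cayley T).dist (φ (x * s)) (φ (x * s * wordProd S w)) := by
            rw [wordProd_cons, ← mul_assoc]
            exact hconnT.dist_triangle
        _ ≤ n + n * w.length := add_le_add (hφ x s s.2) (ih _)
        _ = n * (s :: w).length := by simp [mul_add, add_comm]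
  intro x y
  obtain ⟨w, hw, rfl⟩ := exists_wordProd_of_dist hS hconnS x y
  exact hw ▸ key w x

end WordMetric

section Integration

variable {G H : Type*} [Group G] [Group H] {S : Finset G}

@[simp] lemma sint_nil (σ : G → S → H) (g : G) : sint σ g [] = 1 := rfl

@[simp] lemma sint_cons (σ : G → S → H) (g : G) (s : S) (w : List S) :
    sint σ g (s :: w) = σ g s * sint σ (g * s) w := rfl

lemma sint_append (σ : G → S → H) (g : G) (w₁ w₂ : List S) :
    sint σ g (w₁ ++ w₂) = sint σ g w₁ * sint σ (g * wordProd S w₁) w₂ := by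
  induction w₁ generalizing g with
  | nil => simp
  | cons s w ih => simp [ih, mul_assoc]

lemma sint_eq_of_forall_eq_inv_mul {σ : G → S → H} {f : G → H}
    (hf : ∀ g (s : S), σ g s = (f g)⁻¹ * f (g * s)) (g : G) (w : List S) :
    sint σ g w = (f g)⁻¹ * f (g * wordProd S w) := by
  induction w generalizing g with
  | nil => simp
  | cons s w ih => simp [hf, ih, mul_assoc]

lemma sint_mul_left (σ : G → S → H) (a g : G) (w : List S) :
    sint (fun x => σ (a * x)) g w = sint σ (a * g) w := by
  induction w generalizing g with
  | nil => simp
  | cons s w ih => simp [ih, mul_assoc]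

lemma sint_congr {σ σ' : G → S → H} {g : G} {w : List S}
    (h : ∀ u : List S, u.length ≤ w.length → σ (g * wordProd S u) = σ' (g * wordProd S u)) :
    sint σ g w = sint σ' g w := by
  induction w generalizing g with
  | nil => rfl
  | cons s w ih =>
    have h₀ : σ g = σ' g := by simpa using h [] (by simp)
    have h₁ : sint σ (g * s) w = sint σ' (g * s) w :=
      ih fun u hu => by simpa [mul_assoc] using h (s :: u) (by simpa using hu)
    simp [h₀, h₁]

lemma sint_eq_of_presentedBy {K : ℕ} (hK : PresentedBy S K) {σ : G → S → H}
    (hσ : ∀ g (v v' : List S), v.length ≤ K → v'.length ≤ K →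
      wordProd S v = wordProd S v' → sint σ g v = sint σ g v')
    {w w' : List S} (hw : wordProd S w = wordProd S w') (g : G) : sint σ g w = sint σ g w' := by
  have hchain := hK w w' hw
  clear hw
  induction hchain with
  | refl => rfl
  | tail _ hmove ih =>
    obtain ⟨u, v, v', x, rfl, rfl, hv, hv', hvv⟩ := hmove
    simp only [ih, sint_append, wordProd_append, hσ _ v v' hv hv' hvv, hvv]

lemma exists_primitive_of_presentedBy {K : ℕ} (hK : PresentedBy S K)
    (hgen : ∀ g : G, ∃ w : List S, wordProd S w = g) {σ : G → S → H}
    (hσ : ∀ g (v v' : List S), v.length ≤ K → v'.length ≤ K →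
      wordProd S v = wordProd S v' → sint σ g v = sint σ g v') :
    ∃ f : G → H, ∀ g (w : List S), f (g * wordProd S w) = f g * sint σ g w := by
  choose word hword using hgen
  refine ⟨fun g => sint σ 1 (word g), fun g w => ?_⟩
  have h : wordProd S (word (g * wordProd S w)) = wordProd S (word g ++ w) := by
    simp [hword]
  simp only [sint_eq_of_presentedBy hK hσ h, sint_append, hword, one_mul]

end Integration

lemma isSFT_of_forall_mul_left {G A : Type*} [Group G] [Finite A] {W : Set G} (hW : W.Finite)
    (P : (G → A) → Prop)
    (hP : ∀ τ τ' : G → A, (∀ x ∈ W, τ x = τ' x) → P τ → P τ') :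
    IsSFT {σ : G → A | ∀ g, P (fun x => σ (g * x))} := by
  let Forbidden :=
    {p : hW.toFinset → A // ∀ τ : G → A, (∀ x : hW.toFinset, τ x = p x) → ¬ P τ}
  let e := Finite.equivFin Forbidden
  refine ⟨Fin (Nat.card Forbidden), inferInstance, fun _ => hW.toFinset, fun i => (e.symm i).1,
    ?_⟩
  ext σ
  simp only [Set.mem_ofPred_eq]
  refine ⟨fun hσ g i => ?_, fun hσ g => by_contra fun hg => ?_⟩
  · by_contra! h
    exact (e.symm i).2 _ h (hσ g)
  · obtain ⟨x, hx⟩ := hσ g (e ⟨fun x => σ (g * x), fun τ hτ hPτ =>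
      hg (hP τ _ (fun x hx => hτ ⟨x, hW.mem_toFinset.2 hx⟩) hPτ)⟩)
    simp at hx

section Propagation

variable {G H : Type*} [Group G] [Group H] {S : Set G} {T : Finset H} {B : Set H}

def mark (f : G → H) (p : G × B) : H := f p.1 * p.2

def Propagates (S : Set G) (f : G → H) (R : ℕ) : List T → G × B → G × B → Prop
  | [], p, q => q = p
  | t :: x, p, q => ∃ p', (cayley S).dist p.1 p'.1 ≤ R ∧ mark f p' = mark f p * t ∧
      Propagates S f R x p' q

variable {f : G → H} {R : ℕ}

lemma propagates_append {x y : List T} {p r : G × B} :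
    Propagates S f R (x ++ y) p r ↔ ∃ q, Propagates S f R x p q ∧ Propagates S f R y q r := by
  induction x generalizing p with
  | nil => exact ⟨fun h => ⟨p, rfl, h⟩, fun ⟨q, hq, h⟩ => hq ▸ h⟩
  | cons t x ih =>
    simp only [List.cons_append, Propagates, ih]
    exact ⟨fun ⟨p', h₁, h₂, q, h₃, h₄⟩ => ⟨q, ⟨p', h₁, h₂, h₃⟩, h₄⟩,
      fun ⟨q, ⟨p', h₁, h₂, h₃⟩, h₄⟩ => ⟨p', h₁, h₂, q, h₃, h₄⟩⟩

lemma propagates_singleton {t : T} {p q : G × B} :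
    Propagates S f R [t] p q ↔ (cayley S).dist p.1 q.1 ≤ R ∧ mark f q = mark f p * t := by
  simp [Propagates]

lemma mark_of_propagates {x : List T} {p q : G × B} (h : Propagates S f R x p q) :
    mark f q = mark f p * wordProd T x := by
  induction x generalizing p with
  | nil => simp [show q = p from h]
  | cons t x ih =>
    obtain ⟨p', -, hp', h⟩ := h
    rw [ih h, hp', wordProd_cons, mul_assoc]

lemma dist_of_propagates (hconn : (cayley S).Connected) {x : List T} {p q : G × B}
    (h : Propagates S f R x p q) : (cayley S).dist p.1 q.1 ≤ x.length * R := by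
  induction x generalizing p with
  | nil => simp [show q = p from h]
  | cons t x ih =>
    obtain ⟨p', hp', -, h⟩ := h
    calc (cayley S).dist p.1 q.1 ≤ (cayley S).dist p.1 p'.1 + (cayley S).dist p'.1 q.1 :=
          hconn.dist_triangle
      _ ≤ R + x.length * R := add_le_add hp' (ih h)
      _ = (t :: x).length * R := by simp [add_mul, add_comm]

lemma exists_propagates
    (hstep : ∀ (p : G × B) (t : T), ∃ q, Propagates S f R [t] p q)
    (x : List T) (p : G × B) : ∃ q, Propagates S f R x p q := by
  induction x generalizing p with
  | nil => exact ⟨p, rfl⟩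
  | cons t x ih =>
    obtain ⟨p', hp'⟩ := hstep p t
    obtain ⟨q, hq⟩ := ih p'
    exact ⟨q, propagates_append.2 ⟨p', hp', hq⟩⟩

def MergesWithin (S : Set G) (f : G → H) (v : G → B → G) (D : ℕ) : Prop :=
  ∀ p p' : G × B, mark f p = mark f p' → (cayley S).dist p.1 p'.1 ≤ D →
    v p.1 p.2 = v p'.1 p'.2

variable {v : G → B → G} {m D : ℕ}

lemma landing_eq_of_propagates (hconn : (cayley S).Connected)
    (hv : ∀ g k, (cayley S).dist g (v g k) ≤ m) (hM : MergesWithin S f v D) {K : ℕ}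
    (hD : 2 * (K * R + m) ≤ D) {x x' : List T} {p p' q q' : G × B}
    (hmark : mark f p = mark f p') (hland : v p.1 p.2 = v p'.1 p'.2)
    (hx : Propagates S f R x p q) (hx' : Propagates S f R x' p' q')
    (hxx : wordProd T x = wordProd T x') (hK : x.length ≤ K) (hK' : x'.length ≤ K) :
    v q.1 q.2 = v q'.1 q'.2 := by
  refine hM q q' (by rw [mark_of_propagates hx, mark_of_propagates hx', hmark, hxx]) ?_
  have h₁ : (cayley S).dist q.1 p.1 ≤ K * R := by
    rw [SimpleGraph.dist_comm]
    exact (dist_of_propagates hconn hx).trans (Nat.mul_le_mul_right R hK)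
  have h₂ : (cayley S).dist p'.1 q'.1 ≤ K * R :=
    (dist_of_propagates hconn hx').trans (Nat.mul_le_mul_right R hK')
  have h₃ : (cayley S).dist (v p.1 p.2) p'.1 ≤ m := by
    rw [hland, SimpleGraph.dist_comm]
    exact hv _ _
  calc (cayley S).dist q.1 q'.1
      ≤ (cayley S).dist q.1 p.1 + (cayley S).dist p.1 (v p.1 p.2) +
          ((cayley S).dist (v p.1 p.2) p'.1 + (cayley S).dist p'.1 q'.1) :=
        (hconn.dist_triangle4 _ _ _ _).trans (Nat.add_le_add_left hconn.dist_triangle _)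
    _ ≤ K * R + m + (m + K * R) := by gcongr; exact hv _ _
    _ ≤ D := by omega

lemma landing_eq_of_propagates_same_word (hconn : (cayley S).Connected)
    (hv : ∀ g k, (cayley S).dist g (v g k) ≤ m) (hM : MergesWithin S f v D)
    (hD : 2 * (R + m) ≤ D) {x : List T} {p p' q q' : G × B}
    (hmark : mark f p = mark f p') (hland : v p.1 p.2 = v p'.1 p'.2)
    (hx : Propagates S f R x p q) (hx' : Propagates S f R x p' q') :
    v q.1 q.2 = v q'.1 q'.2 := by
  induction x generalizing p p' with
  | nil => rwa [show q = p from hx, show q' = p' from hx']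
  | cons t x ih =>
    obtain ⟨r, hr₁, hr₂, hx⟩ := hx
    obtain ⟨r', hr₁', hr₂', hx'⟩ := hx'
    refine ih (by rw [hr₂, hr₂', hmark]) ?_ hx hx'
    exact landing_eq_of_propagates hconn hv hM (K := 1) (by simpa using hD) hmark hland
      (x := [t]) (propagates_singleton.2 ⟨hr₁, hr₂⟩) (propagates_singleton.2 ⟨hr₁', hr₂'⟩)
      rfl le_rfl le_rfl

lemma landing_eq_of_elemMove (hconn : (cayley S).Connected)
    (hv : ∀ g k, (cayley S).dist g (v g k) ≤ m) (hM : MergesWithin S f v D) {K : ℕ}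
    (hD : 2 * ((K + 1) * R + m) ≤ D) {x x' : List T} (hmove : ElemMove T K x x')
    {p q q' : G × B} (hx : Propagates S f R x p q) (hx' : Propagates S f R x' p q') :
    v q.1 q.2 = v q'.1 q'.2 := by
  obtain ⟨u, w, w', z, rfl, rfl, hwK, hwK', hww⟩ := hmove
  have hD₁ : 2 * (R + m) ≤ D := le_trans (by nlinarith) hD
  have hD₂ : 2 * (K * R + m) ≤ D := le_trans (by nlinarith) hD
  obtain ⟨b, hb, hz⟩ := propagates_append.1 hx
  obtain ⟨a, hu, hw⟩ := propagates_append.1 hb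
  obtain ⟨b', hb', hz'⟩ := propagates_append.1 hx'
  obtain ⟨a', hu', hw'⟩ := propagates_append.1 hb'
  have ha := landing_eq_of_propagates_same_word hconn hv hM hD₁ rfl rfl hu hu'
  have ha' : mark f a = mark f a' := by rw [mark_of_propagates hu, mark_of_propagates hu']
  have hb := landing_eq_of_propagates hconn hv hM hD₂ ha' ha hw hw' hww hwK hwK'
  have hb' : mark f b = mark f b' := by
    rw [mark_of_propagates hw, mark_of_propagates hw', ha', hww]
  exact landing_eq_of_propagates_same_word hconn hv hM hD₁ hb' hb hz hz'

lemma landing_eq_of_wordProd_eq (hconn : (cayley S).Connected)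
    (hv : ∀ g k, (cayley S).dist g (v g k) ≤ m) (hM : MergesWithin S f v D)
    (hstep : ∀ (p : G × B) (t : T), ∃ q, Propagates S f R [t] p q)
    {K : ℕ} (hK : PresentedBy T K) (hD : 2 * ((K + 1) * R + m) ≤ D) {x x' : List T}
    (hxx : wordProd T x = wordProd T x') {p q q' : G × B}
    (hx : Propagates S f R x p q) (hx' : Propagates S f R x' p q') :
    v q.1 q.2 = v q'.1 q'.2 := by
  have hchain := hK x x' hxx
  clear hxx
  induction hchain generalizing q' with
  | refl =>
    exact landing_eq_of_propagates_same_word hconn hv hM (le_trans (by nlinarith) hD) rfl rfl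
      hx hx'
  | @tail y x' _ hmove ih =>
    obtain ⟨r, hr⟩ := exists_propagates hstep y p
    exact (ih hr).trans (landing_eq_of_elemMove hconn hv hM hD hmove hr hx')

lemma exists_landing_map (hconn : (cayley S).Connected)
    (hv : ∀ g k, (cayley S).dist g (v g k) ≤ m) (hM : MergesWithin S f v D)
    (hstep : ∀ (p : G × B) (t : T), ∃ q, Propagates S f R [t] p q)
    {K : ℕ} (hK : PresentedBy T K) (hD : 2 * ((K + 1) * R + m) ≤ D)
    (hgen : ∀ h : H, ∃ x : List T, wordProd T x = h) (p₀ : G × B) :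
    ∃ F : H → G, ∀ (x : List T) (q : G × B),
      Propagates S f R x p₀ q → F (mark f q) = v q.1 q.2 := by
  choose word hword using hgen
  choose endpt hendpt using fun x => exists_propagates hstep x p₀
  let q : H → G × B := fun h => endpt (word ((mark f p₀)⁻¹ * h))
  refine ⟨fun h => v (q h).1 (q h).2,
    fun x q' hq' => landing_eq_of_wordProd_eq hconn hv hM hstep hK hD ?_ (hendpt _) hq'⟩
  rw [hword, mark_of_propagates hq', inv_mul_cancel_left]

lemma exists_propagates_mark_eq
    (hstep : ∀ (p : G × B) (t : T), ∃ q, Propagates S f R [t] p q)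
    (hgen : ∀ h : H, ∃ x : List T, wordProd T x = h) (p₀ : G × B) (h : H) :
    ∃ (x : List T) (q : G × B), Propagates S f R x p₀ q ∧ mark f q = h := by
  obtain ⟨x, hx⟩ := hgen ((mark f p₀)⁻¹ * h)
  obtain ⟨q, hq⟩ := exists_propagates hstep x p₀
  exact ⟨x, q, hq, by rw [mark_of_propagates hq, hx, mul_inv_cancel_left]⟩

end Propagation

section Configurations

variable {G H : Type*} [Group G] [Group H] {S : Finset G} {T : Finset H} {n : ℕ}

abbrev Alph (S : Finset G) (T : Finset H) (n : ℕ) :=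
  (S → ball (T : Set H) n 1) × (ball (T : Set H) n 1 → ball (S : Set G) (n ^ 2 + n) 1)

-- For `σ = (df, ℓ_{Ff})`: `jump σ g s = f(g)⁻¹ f(gs)` and
-- `landing σ g k = g ℓ_{Ff}(g)(k) = F(f(g) k)`.
def jump (σ : G → Alph S T n) (g : G) (s : S) : H := (σ g).1 s

def landing (σ : G → Alph S T n) (g : G) (k : ball (T : Set H) n 1) : G := g * (σ g).2 k

-- Local forms of: `f` is well defined, `d(F(f g), g) ≤ n`, `d(f(F h), h) ≤ n`, each `f g * k * t`
-- is some `f g' * k'` with `g'` near `g`, `F` is well defined, and `F` is `n`-Lipschitz.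
structure Rules (KG D : ℕ) (σ : G → Alph S T n) (g : G) : Prop where
  relator : ∀ v v' : List S, v.length ≤ KG → v'.length ≤ KG →
    wordProd S v = wordProd S v' → sint (jump σ) g v = sint (jump σ) g v'
  dist_landing_one : ∀ k : ball (T : Set H) n 1, (k : H) = 1 →
    (cayley (S : Set G)).dist g (landing σ g k) ≤ n
  dist_sint_landing : ∀ (k : ball (T : Set H) n 1) (w : List S), w.length ≤ n ^ 2 + n →
    g * wordProd S w = landing σ g k → (cayley (T : Set H)).dist (sint (jump σ) g w) k ≤ n
  step : ∀ (k : ball (T : Set H) n 1) (t : T), ∃ w : List S, w.length ≤ n ^ 2 + 2 * n ∧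
    ∃ k' : ball (T : Set H) n 1, (k : H) * t = sint (jump σ) g w * k'
  merge : ∀ u : List S, u.length ≤ D → ∀ k k' : ball (T : Set H) n 1,
    (k : H) = sint (jump σ) g u * k' → landing σ g k = landing σ (g * wordProd S u) k'
  lip : ∀ u : List S, u.length ≤ n ^ 2 + 2 * n → ∀ (k k' : ball (T : Set H) n 1) (t : T),
    (k : H) * t = sint (jump σ) g u * k' →
    (cayley (S : Set G)).dist (landing σ g k) (landing σ (g * wordProd S u) k') ≤ n

variable {KG D : ℕ}

lemma Rules.comp_mul_left {σ : G → Alph S T n} {a g : G} (h : Rules KG D σ (a * g)) :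
    Rules KG D (fun x => σ (a * x)) g := by
  have hs : ∀ x w, sint (jump fun x => σ (a * x)) x w = sint (jump σ) (a * x) w :=
    sint_mul_left (jump σ) a
  have hl : ∀ x k, landing σ (a * x) k = a * landing (fun x => σ (a * x)) x k := by
    simp [landing, mul_assoc]
  refine ⟨fun v v' hv hv' e => ?_, fun k hk => ?_, fun k w hw e => ?_, fun k t => ?_,
    fun u hu k k' e => ?_, fun u hu k k' t e => ?_⟩
  · rw [hs, hs]
    exact h.relator v v' hv hv' e
  · rw [← cayley_dist_mul_left _ a, ← hl]
    exact h.dist_landing_one k hk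
  · rw [hs]
    exact h.dist_sint_landing k w hw (by rw [hl, ← e, mul_assoc])
  · simpa only [hs] using h.step k t
  · rw [hs] at e
    apply mul_left_cancel (a := a)
    rw [← hl, ← hl, ← mul_assoc]
    exact h.merge u hu k k' e
  · rw [hs] at e
    rw [← cayley_dist_mul_left _ a, ← hl, ← hl, ← mul_assoc]
    exact h.lip u hu k k' t e

lemma rules_comp_mul_left_iff {σ : G → Alph S T n} {a g : G} :
    Rules KG D (fun x => σ (a * x)) g ↔ Rules KG D σ (a * g) := by
  refine ⟨fun h => ?_, Rules.comp_mul_left⟩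
  have := Rules.comp_mul_left (a := a⁻¹) (g := a * g) (by rwa [inv_mul_cancel_left])
  simpa using this

lemma Rules.congr {L : ℕ} (hKG : KG ≤ L) (hD : D ≤ L) (hn : n ^ 2 + 2 * n ≤ L)
    {σ σ' : G → Alph S T n} {g : G}
    (hσσ' : ∀ w : List S, w.length ≤ L → σ (g * wordProd S w) = σ' (g * wordProd S w))
    (h : Rules KG D σ g) : Rules KG D σ' g := by
  have hs : ∀ w : List S, w.length ≤ L → sint (jump σ) g w = sint (jump σ') g w :=
    fun w hw => sint_congr fun u hu => funext fun s => by simp only [jump, hσσ' u (hu.trans hw)]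
  have hl : ∀ (w : List S), w.length ≤ L → ∀ k,
      landing σ (g * wordProd S w) k = landing σ' (g * wordProd S w) k :=
    fun w hw k => by simp only [landing, hσσ' w hw]
  have hl₀ : ∀ k, landing σ g k = landing σ' g k := by simpa using hl [] (Nat.zero_le _)
  refine ⟨fun v v' hv hv' e => ?_, fun k hk => ?_, fun k w hw e => ?_, fun k t => ?_,
    fun u hu k k' e => ?_, fun u hu k k' t e => ?_⟩
  · rw [← hs v (hv.trans hKG), ← hs v' (hv'.trans hKG)]
    exact h.relator v v' hv hv' e
  · rw [← hl₀]
    exact h.dist_landing_one k hk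
  · rw [← hs w (by omega)]
    exact h.dist_sint_landing k w hw (by rw [e, hl₀])
  · obtain ⟨w, hw, k', e⟩ := h.step k t
    exact ⟨w, hw, k', by rw [e, hs w (hw.trans hn)]⟩
  · rw [← hl₀, ← hl u (hu.trans hD)]
    exact h.merge u hu k k' (by rw [e, hs u (hu.trans hD)])
  · rw [← hl₀, ← hl u (hu.trans hn)]
    exact h.lip u hu k k' t (by rw [e, hs u (hu.trans hn)])

lemma rules_of_isQIPair (hS : ∀ s ∈ S, s⁻¹ ∈ S) (hconnS : (cayley (S : Set G)).Connected)
    {σ : G → Alph S T n} {f : G → H} {F : H → G}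
    (hfF : IsQIPair (S : Set G) (T : Set H) n f F)
    (hσ₁ : ∀ (g : G) (s : S), ((σ g).1 s : H) = (f g)⁻¹ * f (g * s))
    (hσ₂ : ∀ (g : G) (k : ball (T : Set H) n 1), ((σ g).2 k : G) = g⁻¹ * F (f g * k))
    (KG D : ℕ) (g : G) : Rules KG D σ g := by
  obtain ⟨-, hF, hFf, hfF⟩ := hfF
  have hs : ∀ x w, sint (jump σ) x w = (f x)⁻¹ * f (x * wordProd S w) :=
    sint_eq_of_forall_eq_inv_mul hσ₁
  have hl : ∀ x k, landing σ x k = F (f x * k) := by simp [landing, hσ₂]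
  have hF₁ : ∀ h (t : T), (cayley (S : Set G)).dist (F h) (F (h * t)) ≤ n := fun h t =>
    (hF _ _).trans (by simpa using Nat.mul_le_mul_left n (dist_mul_le_one t.2))
  refine ⟨fun v v' _ _ e => by rw [hs, hs, e], fun k hk => ?_, fun k w _ e => ?_, fun k t => ?_,
    fun u _ k k' e => ?_, fun u _ k k' t e => ?_⟩
  · rw [hl, hk, mul_one, SimpleGraph.dist_comm]
    exact hFf g
  · rw [hs, e, hl, cayley_dist_inv_mul_left]
    exact hfF _
  · set h := f g * k * t
    obtain ⟨w, hw, hgw⟩ := exists_wordProd_of_dist hS hconnS g (F h)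
    have hk' : (f (F h))⁻¹ * h ∈ ball (T : Set H) n 1 := by
      show _ ≤ n
      rw [← cayley_dist_self_mul _ (f (F h)), mul_inv_cancel_left]
      exact hfF h
    refine ⟨w, ?_, ⟨_, hk'⟩, by simp [hs, hgw, h, mul_assoc]⟩
    calc w.length = (cayley (S : Set G)).dist g (F h) := hw
      _ ≤ (cayley (S : Set G)).dist g (F (f g)) +
          (cayley (S : Set G)).dist (F (f g)) (F (f g * k)) +
          (cayley (S : Set G)).dist (F (f g * k)) (F h) := hconnS.dist_triangle4 _ _ _ _
      _ ≤ n + n * n + n := by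
        gcongr
        · rw [SimpleGraph.dist_comm]; exact hFf g
        · exact (hF _ _).trans (Nat.mul_le_mul_left n (by rw [cayley_dist_self_mul]; exact k.2))
        · exact hF₁ _ t
      _ = n ^ 2 + 2 * n := by ring
  · rw [hs] at e
    rw [hl, hl, e, mul_assoc, mul_inv_cancel_left]
  · rw [hs, mul_assoc] at e
    rw [hl, hl, ← mul_inv_cancel_left (f g) (f (g * wordProd S u) * k'), ← e, ← mul_assoc]
    exact hF₁ _ t

lemma dist_landing_le (σ : G → Alph S T n) (g : G) (k : ball (T : Set H) n 1) :
    (cayley (S : Set G)).dist g (landing σ g k) ≤ n ^ 2 + n := by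
  rw [landing, cayley_dist_self_mul]
  exact ((σ g).2 k).2

def basePoint (T : Finset H) (n : ℕ) : G × ball (T : Set H) n 1 := (1, ⟨1, one_mem_ball _ _⟩)

def IsAnchored (S : Finset G) (T : Finset H) (n : ℕ) (f : G → H) (g : G) : Prop :=
  ∃ (x : List T) (q : G × ball (T : Set H) n 1),
    Propagates S f (n ^ 2 + 2 * n) x (basePoint T n) q ∧ mark f q = f g ∧
    (cayley (S : Set G)).dist q.1 g ≤ n ^ 2 + 2 * n

section Reconstruction

variable {σ : G → Alph S T n} {f : G → H}

lemma exists_step (hR : ∀ g, Rules KG D σ g)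
    (hf : ∀ g (w : List S), f (g * wordProd S w) = f g * sint (jump σ) g w)
    (p : G × ball (T : Set H) n 1) (t : T) : ∃ q, Propagates S f (n ^ 2 + 2 * n) [t] p q := by
  obtain ⟨w, hw, k', e⟩ := (hR p.1).step p.2 t
  refine ⟨(p.1 * wordProd S w, k'),
    propagates_singleton.2 ⟨(dist_mul_wordProd_le _ _).trans hw, ?_⟩⟩
  simp only [mark, hf, e, mul_assoc]

variable (hS : ∀ s ∈ S, s⁻¹ ∈ S) (hconnS : (cayley (S : Set G)).Connected)
  (hR : ∀ g, Rules KG D σ g)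
  (hf : ∀ g (w : List S), f (g * wordProd S w) = f g * sint (jump σ) g w)
include hS hconnS hR hf

lemma mergesWithin_landing : MergesWithin (S : Set G) f (landing σ) D := by
  rintro ⟨g, k⟩ ⟨g', k'⟩ hkk' hd
  obtain ⟨u, hu, rfl⟩ := exists_wordProd_of_dist hS hconnS g g'
  refine (hR g).merge u (hu ▸ hd) k k' ?_
  rw [← mul_right_inj (f g), ← mul_assoc, ← hf]
  exact hkk'

lemma dist_landing_le_of_mark_mul_eq {g g' : G} {k k' : ball (T : Set H) n 1} {t : T}
    (hkk' : f g * k * t = f g' * k') (hd : (cayley (S : Set G)).dist g g' ≤ n ^ 2 + 2 * n) :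
    (cayley (S : Set G)).dist (landing σ g k) (landing σ g' k') ≤ n := by
  obtain ⟨u, hu, rfl⟩ := exists_wordProd_of_dist hS hconnS g g'
  refine (hR g).lip u (hu ▸ hd) k k' t ?_
  rw [← mul_right_inj (f g), ← mul_assoc, ← mul_assoc, ← hf]
  exact hkk'

variable (hT : ∀ t ∈ T, t⁻¹ ∈ T) (hconnT : (cayley (T : Set H)).Connected)
include hT hconnT

lemma IsAnchored.exists_propagates_landing_eq (hD : (n + 1) * (n ^ 2 + 2 * n) ≤ D) {g : G}
    (hg : IsAnchored S T n f g) (k : ball (T : Set H) n 1) :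
    ∃ (x : List T) (q : G × ball (T : Set H) n 1),
      Propagates S f (n ^ 2 + 2 * n) x (basePoint T n) q ∧ mark f q = f g * k ∧
      landing σ q.1 q.2 = landing σ g k := by
  obtain ⟨x, q, hq, hqg, hdq⟩ := hg
  obtain ⟨y, hy, hyk⟩ := exists_wordProd_of_mem_ball hT hconnT k.2
  obtain ⟨q', hq'⟩ := exists_propagates (exists_step hR hf) y q
  have hmark : mark f q' = f g * k := by rw [mark_of_propagates hq', hqg, hyk]
  refine ⟨x ++ y, q', propagates_append.2 ⟨q, hq, hq'⟩, hmark,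
    mergesWithin_landing hS hconnS hR hf q' (g, k) hmark ?_⟩
  calc (cayley (S : Set G)).dist q'.1 g
      ≤ (cayley (S : Set G)).dist q'.1 q.1 + (cayley (S : Set G)).dist q.1 g :=
        hconnS.dist_triangle
    _ ≤ n * (n ^ 2 + 2 * n) + (n ^ 2 + 2 * n) := by
      gcongr
      rw [SimpleGraph.dist_comm]
      exact (dist_of_propagates hconnS hq').trans (Nat.mul_le_mul_right _ hy)
    _ ≤ D := by linarith

lemma IsAnchored.mul (hD : (n + 1) * (n ^ 2 + 2 * n) ≤ D) (hD₀ : 1 ≤ D) {g : G}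
    (hg : IsAnchored S T n f g) (s : S) : IsAnchored S T n f (g * s) := by
  obtain ⟨x, q, hq, hqg, hlq⟩ :=
    hg.exists_propagates_landing_eq hS hconnS hR hf hT hconnT hD ((σ g).1 s)
  have hfs : f (g * s) = f g * (σ g).1 s := by simpa [jump] using hf g [s]
  have hone : landing σ g ((σ g).1 s) = landing σ (g * s) ⟨1, one_mem_ball _ _⟩ := by
    simpa using (hR g).merge [s] (by simpa using hD₀) ((σ g).1 s) ⟨1, one_mem_ball _ _⟩
      (by simp [jump])
  refine ⟨x, q, hq, hqg.trans hfs.symm, ?_⟩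
  calc (cayley (S : Set G)).dist q.1 (g * s)
      ≤ (cayley (S : Set G)).dist q.1 (landing σ q.1 q.2) +
        (cayley (S : Set G)).dist (landing σ q.1 q.2) (g * s) := hconnS.dist_triangle
    _ ≤ (n ^ 2 + n) + n := by
      gcongr
      · exact dist_landing_le σ _ _
      · rw [hlq, hone, SimpleGraph.dist_comm]
        exact (hR _).dist_landing_one _ rfl
    _ = n ^ 2 + 2 * n := by ring

lemma isAnchored (hD : (n + 1) * (n ^ 2 + 2 * n) ≤ D) (hD₀ : 1 ≤ D) (g : G) :
    IsAnchored S T n f g := by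
  obtain ⟨w, rfl⟩ := exists_wordProd_eq hS hconnS g
  induction w using List.reverseRecOn with
  | nil => exact ⟨[], basePoint T n, rfl, by simp [mark, basePoint], by simp [basePoint]⟩
  | append_singleton w s ih =>
    simpa [mul_assoc] using ih.mul hS hconnS hR hf hT hconnT hD hD₀ s

variable {F : H → G} (hF : ∀ (x : List T) (q : G × ball (T : Set H) n 1),
    Propagates S f (n ^ 2 + 2 * n) x (basePoint T n) q → F (mark f q) = landing σ q.1 q.2)
include hF

lemma F_mul_eq_landing (hD : (n + 1) * (n ^ 2 + 2 * n) ≤ D) (hD₀ : 1 ≤ D) (g : G)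
    (k : ball (T : Set H) n 1) : F (f g * k) = landing σ g k := by
  obtain ⟨x, q, hq, hqg, hlq⟩ := (isAnchored hS hconnS hR hf hT hconnT hD hD₀ g)
    |>.exists_propagates_landing_eq hS hconnS hR hf hT hconnT hD k
  rw [← hqg, hF x q hq, hlq]

lemma dist_F_f_le (hD : (n + 1) * (n ^ 2 + 2 * n) ≤ D) (hD₀ : 1 ≤ D) (g : G) :
    (cayley (S : Set G)).dist (F (f g)) g ≤ n := by
  have h := F_mul_eq_landing hS hconnS hR hf hT hconnT hF hD hD₀ g ⟨1, one_mem_ball _ _⟩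
  rw [mul_one] at h
  rw [h, SimpleGraph.dist_comm]
  exact (hR g).dist_landing_one _ rfl

lemma dist_f_F_le (h : H) : (cayley (T : Set H)).dist (f (F h)) h ≤ n := by
  obtain ⟨x, q, hq, rfl⟩ := exists_propagates_mark_eq (exists_step hR hf)
    (exists_wordProd_eq hT hconnT) (basePoint T n) h
  obtain ⟨w, hw, hwq⟩ := exists_wordProd_of_dist hS hconnS q.1 (landing σ q.1 q.2)
  rw [hF x q hq, ← hwq, hf, mark, cayley_dist_mul_left]
  exact (hR q.1).dist_sint_landing q.2 w (hw ▸ dist_landing_le σ _ _) hwq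

lemma isLip_F : IsLip (T : Set H) (S : Set G) n F := by
  refine isLip_of_dist_mul_le hT hconnT hconnS fun h t ht => ?_
  obtain ⟨x, q, hq, rfl⟩ := exists_propagates_mark_eq (exists_step hR hf)
    (exists_wordProd_eq hT hconnT) (basePoint T n) h
  obtain ⟨q', hqq'⟩ := exists_step hR hf q ⟨t, ht⟩
  obtain ⟨hd, hmark⟩ := propagates_singleton.1 hqq'
  rw [hF x q hq, show mark f q * t = mark f q' from hmark.symm,
    hF _ q' (propagates_append.2 ⟨q, hq, hqq'⟩)]
  exact dist_landing_le_of_mark_mul_eq hS hconnS hR hf hmark.symm hd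

end Reconstruction

lemma isLip_of_jump (hS : ∀ s ∈ S, s⁻¹ ∈ S) (hconnS : (cayley (S : Set G)).Connected)
    (hconnT : (cayley (T : Set H)).Connected) {σ : G → Alph S T n} {f : G → H}
    (hf : ∀ g (w : List S), f (g * wordProd S w) = f g * sint (jump σ) g w) :
    IsLip (S : Set G) (T : Set H) n f := by
  refine isLip_of_dist_mul_le hS hconnS hconnT fun g s hs => ?_
  have hfs : f (g * s) = f g * (σ g).1 ⟨s, hs⟩ := by simpa [jump] using hf g [⟨s, hs⟩]
  rw [hfs, cayley_dist_self_mul]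
  exact ((σ g).1 _).2

lemma exists_isQIPair_of_rules (hS : ∀ s ∈ S, s⁻¹ ∈ S)
    (hconnS : (cayley (S : Set G)).Connected)
    (hT : ∀ t ∈ T, t⁻¹ ∈ T) (hconnT : (cayley (T : Set H)).Connected) {KH : ℕ}
    (hKG : PresentedBy S KG) (hKH : PresentedBy T KH)
    (hD : 2 * ((KH + 1) * (n ^ 2 + 2 * n) + (n ^ 2 + n)) + (n + 1) * (n ^ 2 + 2 * n) < D)
    {σ : G → Alph S T n} (hR : ∀ g, Rules KG D σ g) :
    ∃ (f : G → H) (F : H → G), IsQIPair (S : Set G) (T : Set H) n f F ∧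
      (∀ (g : G) (s : S), ((σ g).1 s : H) = (f g)⁻¹ * f (g * s)) ∧
      (∀ (g : G) (k : ball (T : Set H) n 1), ((σ g).2 k : G) = g⁻¹ * F (f g * k)) := by
  obtain ⟨f, hf⟩ := exists_primitive_of_presentedBy hKG (exists_wordProd_eq hS hconnS)
    fun g => (hR g).relator
  obtain ⟨F, hF⟩ := exists_landing_map hconnS (dist_landing_le σ)
    (mergesWithin_landing hS hconnS hR hf) (exists_step hR hf) hKH (by omega)
    (exists_wordProd_eq hT hconnT) (basePoint T n)
  have hD₁ : (n + 1) * (n ^ 2 + 2 * n) ≤ D := by omega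
  have hD₀ : 1 ≤ D := by omega
  refine ⟨f, F, ⟨isLip_of_jump hS hconnS hconnT hf, isLip_F hS hconnS hR hf hT hconnT hF,
    dist_F_f_le hS hconnS hR hf hT hconnT hF hD₁ hD₀,
    dist_f_F_le hS hconnS hR hf hT hconnT hF⟩, fun g s => ?_, fun g k => ?_⟩
  · rw [eq_inv_mul_iff_mul_eq]
    simpa [jump] using (hf g [s]).symm
  · rw [eq_inv_mul_iff_mul_eq]
    exact (F_mul_eq_landing hS hconnS hR hf hT hconnT hF hD₁ hD₀ g k).symm

end Configurations

/-- for finitely presented `G`, `H`, the set of pairs `(df, ℓ_{Ff})` over all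
`n`-QI pairs `(f,F)`, viewed inside `𝒜^G` with
`𝒜 = B_H(n,1)^S × B_G(n²+n,1)^{B_H(n,1)}`, is a subshift of finite type. -/
theorem stmt17 {G H : Type*} [Group G] [Group H] (S : Finset G) (T : Finset H)
    (hSsym : ∀ s ∈ S, s⁻¹ ∈ S) (hSgen : Subgroup.closure (S : Set G) = ⊤)
    (hTsym : ∀ t ∈ T, t⁻¹ ∈ T) (hTgen : Subgroup.closure (T : Set H) = ⊤)
    (hGfp : ∃ K : ℕ, PresentedBy S K)
    (hHfp : ∃ K : ℕ, PresentedBy T K) (n : ℕ) :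
    IsSFT {σ : G → ((↥S → ↥(ball (T : Set H) n 1)) ×
        (↥(ball (T : Set H) n 1) → ↥(ball (S : Set G) (n ^ 2 + n) 1))) |
      ∃ (f : G → H) (F : H → G), IsQIPair (S : Set G) (T : Set H) n f F ∧
        (∀ (g : G) (s : ↥S), (((σ g).1 s : H)) = (f g)⁻¹ * f (g * ↑s)) ∧
        (∀ (g : G) (k : ↥(ball (T : Set H) n 1)),
          (((σ g).2 k : G)) = g⁻¹ * F (f g * ↑k))} := by
  obtain ⟨KG, hKG⟩ := hGfp
  obtain ⟨KH, hKH⟩ := hHfp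
  have hconnS := cayley_connected hSsym hSgen
  have hconnT := cayley_connected hTsym hTgen
  have : Finite (ball (T : Set H) n 1) := (ball_finite hTsym hconnT n).to_subtype
  have : Finite (ball (S : Set G) (n ^ 2 + n) 1) := (ball_finite hSsym hconnS _).to_subtype
  have : Finite (Alph S T n) := inferInstance
  set D := 2 * ((KH + 1) * (n ^ 2 + 2 * n) + (n ^ 2 + n)) + (n + 1) * (n ^ 2 + 2 * n) + 1
  set L := KG + D + (n ^ 2 + 2 * n)
  have hSFT := isSFT_of_forall_mul_left ((List.finite_length_le S L).image (wordProd S))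
    (fun τ : G → Alph S T n => Rules KG D τ 1) fun τ τ' h =>
      Rules.congr (L := L) (by omega) (by omega) (by omega) fun w hw => by
        simpa using h _ ⟨w, hw, rfl⟩
  convert hSFT using 1
  ext σ
  simp only [Set.mem_ofPred_eq, rules_comp_mul_left_iff, mul_one]
  exact ⟨fun ⟨f, F, hfF, h₁, h₂⟩ g => rules_of_isQIPair hSsym hconnS hfF h₁ h₂ KG D g,
    exists_isQIPair_of_rules hSsym hconnS hTsym hconnT hKG hKH (by omega)⟩
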